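/- Let a, b, c, d ∈ ℂ and define H_III(x,u,v) = (1/x)·[2u²v² − (2axu² + (2b+1)u − 2cx)v + a(b+d)xu]. Then there exist complex numbers α, β, γ, δ (depending only on a, b, c, d) such that for every open set Ω ⊆ ℂ and all differentiable functions u, v : Ω → ℂ with x ≠ 0 and u(x) ≠ 0 for all x ∈ Ω, if u'(x) = (∂H_III/∂v)(x,u(x),v(x)) and v'(x) = −(∂H_III/∂u)(x,u(x),v(x)) for all x ∈ Ω, then u''(x) = u'(x)²/u(x) − u'(x)/x + (α·u(x)² + β)/x + γ·u(x)³ + δ/u(x) for all x ∈ Ω. -/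

import Mathlib

/-- The Okamoto Hamiltonian of the third Painlevé equation:
`H_III(x,u,v) = (1/x)·[2u²v² − (2axu² + (2b+1)u − 2cx)v + a(b+d)xu]`. -/
noncomputable def HIII (a b c d x u v : ℂ) : ℂ :=
  (1 / x) * (2 * u ^ 2 * v ^ 2 - (2 * a * x * u ^ 2 + (2 * b + 1) * u - 2 * c * x) * v
    + a * (b + d) * x * u)

/-!
Write `u' = ∂H/∂v = P(x, u, v) / x`. Differentiating this once more, the quotient rule gives
`u'' = (P' - u') / x`, where `P'` involves `v'`, replaced by `-∂H/∂u`. The resulting expression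
in `x, u, v` is identically equal to the right-hand side of `P_III(α, β, γ, δ)` with
`α = -4ad`, `β = 4c(b + 1)`, `γ = 4a²`, `δ = -4c²`.
-/

open Filter Topology

namespace HIII

variable (a b c d : ℂ)

noncomputable def dv (x u v : ℂ) : ℂ :=
  (4 * u ^ 2 * v - (2 * a * x * u ^ 2 + (2 * b + 1) * u - 2 * c * x)) / x

noncomputable def du (x u v : ℂ) : ℂ :=
  (4 * u * v ^ 2 - (4 * a * x * u + 2 * b + 1) * v + a * (b + d) * x) / x

variable {a b c d}

theorem hasDerivAt_v (x u v : ℂ) :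
    HasDerivAt (fun w => HIII a b c d x u w) (dv a b c x u v) v := by
  have h := ((((hasDerivAt_pow 2 v).const_mul (2 * u ^ 2)).sub
    ((hasDerivAt_id v).const_mul (2 * a * x * u ^ 2 + (2 * b + 1) * u - 2 * c * x))).add_const
      (a * (b + d) * x * u)).const_mul (1 / x)
  refine h.congr_deriv ?_
  simp only [dv]; ring

theorem hasDerivAt_u (x u v : ℂ) :
    HasDerivAt (fun w => HIII a b c d x w v) (du a b d x u v) u := by
  have h := (((((hasDerivAt_pow 2 u).const_mul 2).mul_const (v ^ 2)).sub
    (((((hasDerivAt_pow 2 u).const_mul (2 * a * x)).add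
      ((hasDerivAt_id u).const_mul (2 * b + 1))).sub_const (2 * c * x)).mul_const v)).add
      ((hasDerivAt_id u).const_mul (a * (b + d) * x))).const_mul (1 / x)
  refine h.congr_deriv ?_
  simp only [du]; ring

@[simp] theorem deriv_v (x u v : ℂ) : deriv (fun w => HIII a b c d x u w) v = dv a b c x u v :=
  (hasDerivAt_v x u v).deriv

@[simp] theorem deriv_u (x u v : ℂ) : deriv (fun w => HIII a b c d x w v) u = du a b d x u v :=
  (hasDerivAt_u x u v).deriv

theorem hasDerivAt_dv_comp {u v : ℂ → ℂ} {u' v' x : ℂ} (hu : HasDerivAt u u' x)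
    (hv : HasDerivAt v v' x) (hx : x ≠ 0) :
    HasDerivAt (fun y => dv a b c y (u y) (v y))
      ((8 * u x * u' * v x + 4 * u x ^ 2 * v' - 2 * a * u x ^ 2 - 4 * a * x * u x * u'
        - (2 * b + 1) * u' + 2 * c - dv a b c x (u x) (v x)) / x) x := by
  have hP := (((hu.pow 2).const_mul 4).mul hv).sub
    ((((hasDerivAt_id x).const_mul (2 * a)).mul (hu.pow 2)).add (hu.const_mul (2 * b + 1)) |>.sub
      ((hasDerivAt_id x).const_mul (2 * c)))
  refine (hP.div (hasDerivAt_id x) hx).congr_deriv ?_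
  simp only [dv, id, Pi.pow_apply, Pi.mul_apply, Pi.sub_apply, Pi.add_apply]
  field_simp
  ring

theorem secondDeriv_eq_painleveIII_rhs {x u v : ℂ} (hx : x ≠ 0) (hu : u ≠ 0) :
    let u' := dv a b c x u v
    (8 * u * u' * v + 4 * u ^ 2 * (-du a b d x u v) - 2 * a * u ^ 2 - 4 * a * x * u * u'
        - (2 * b + 1) * u' + 2 * c - u') / x =
      u' ^ 2 / u - u' / x + (-4 * a * d * u ^ 2 + 4 * c * (b + 1)) / x
        + 4 * a ^ 2 * u ^ 3 + -4 * c ^ 2 / u := by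
  simp only [dv, du]
  field_simp
  ring

end HIII

/-- Painlevé III admits a rational Hamiltonian form: there exist parameters `α β γ δ`
(depending only on `a b c d`) such that any solution `(u,v)` of the Hamiltonian system
`u' = ∂H_III/∂v`, `v' = −∂H_III/∂u` on an open set `Ω ⊆ ℂ` (with `x ≠ 0`, `u ≠ 0` on `Ω`)
has `u` a solution of the third Painlevé equation `P_III(α,β,γ,δ)`. -/
theorem stmt_8 (a b c d : ℂ) :
    ∃ α β γ δ : ℂ, ∀ (Ω : Set ℂ), IsOpen Ω → ∀ u v : ℂ → ℂ,
      (∀ x ∈ Ω, x ≠ 0) → (∀ x ∈ Ω, u x ≠ 0) →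
      (∀ x ∈ Ω, HasDerivAt u (deriv (fun w => HIII a b c d x (u x) w) (v x)) x) →
      (∀ x ∈ Ω, HasDerivAt v (-(deriv (fun w => HIII a b c d x w (v x)) (u x))) x) →
      ∀ x ∈ Ω, deriv (deriv u) x =
        (deriv u x) ^ 2 / u x - deriv u x / x + (α * (u x) ^ 2 + β) / x
          + γ * (u x) ^ 3 + δ / u x := by
  refine ⟨-4 * a * d, 4 * c * (b + 1), 4 * a ^ 2, -4 * c ^ 2,
    fun Ω hΩ u v hx0 hu0 hu hv x hx => ?_⟩
  simp only [HIII.deriv_v, HIII.deriv_u] at hu hv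
  have hu' : deriv u =ᶠ[𝓝 x] fun y => HIII.dv a b c y (u y) (v y) :=
    eventually_of_mem (hΩ.mem_nhds hx) fun y hy => (hu y hy).deriv
  rw [hu'.deriv_eq, (HIII.hasDerivAt_dv_comp (hu x hx) (hv x hx) (hx0 x hx)).deriv,
    (hu x hx).deriv]
  exact HIII.secondDeriv_eq_painleveIII_rhs (hx0 x hx) (hu0 x hx)
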